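/- Let f(t) = e^{−g(t)} be a log-concave probability density on ℝ (g : ℝ → ℝ convex) whose associated distribution has variance 1 and median 0. Then for all t ∈ [ −1/(3e⁴), 1/(3e⁴) ], one has f(t) ≥ 1/(4e⁴). -/

import Mathlib

/-!
Log-concavity makes `f = e^{-g}` quasi-concave, so it suffices to find points `b ≤ -δ` and
`a ≥ δ` with `f ≥ c`, where `δ = 1/(3e⁴)` and `c = 1/(4e⁴)`.

First, `f ≤ 19`. If `f(x) = M`, then `f` drops to `M/2` at some `x₁ ≤ x + 3/M` (the total mass
is `1`), and beyond `x₁` convexity of `g` forces `f` to decay exponentially at rate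
`log 2 / (x₁ - x)`. Hence each one-sided second moment about `x` is at most `180/M²`, while the
full second moment about any point is at least the variance `1`.

So `[0, δ)` and `(-δ, 0)` carry mass at most `19δ` each, and by Chebyshev at most `1/9` of the
mass lies outside `[m - 3, m + 3]`, `m` the mean. The median condition then leaves mass larger
than `6c` on each of `[δ, ∞) ∩ [m - 3, m + 3]` and `(-∞, -δ] ∩ [m - 3, m + 3]`, sets of length at
most `6`, so `f ≥ c` somewhere on each.
-/

open MeasureTheory Real Set

section SetIntegral

variable {X : Type*} [MeasurableSpace X] {μ : Measure X} {f : X → ℝ} {s t : Set X}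

lemma setIntegral_le_mul_measureReal_of_le {K : ℝ} (hs : MeasurableSet s) (hμs : μ s ≠ ⊤)
    (hf : IntegrableOn f s μ) (hK : ∀ x ∈ s, f x ≤ K) : ∫ x in s, f x ∂μ ≤ K * μ.real s := by
  have := setIntegral_mono_on hf (integrableOn_const hμs) hs hK
  rwa [setIntegral_const, smul_eq_mul, mul_comm] at this

lemma exists_const_le_of_mul_measureReal_lt {c : ℝ} (hs : MeasurableSet s) (hμs : μ s ≠ ⊤)
    (hf : IntegrableOn f s μ) (h : c * μ.real s < ∫ x in s, f x ∂μ) : ∃ x ∈ s, c ≤ f x := by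
  by_contra! hlt
  exact h.not_ge (setIntegral_le_mul_measureReal_of_le hs hμs hf fun x hx => (hlt x hx).le)

lemma sub_mul_measureReal_le_setIntegral_sdiff {K : ℝ} (ht : MeasurableSet t) (hts : t ⊆ s)
    (hμt : μ t ≠ ⊤) (hf : IntegrableOn f s μ) (hK : ∀ x ∈ t, f x ≤ K) :
    ∫ x in s, f x ∂μ - K * μ.real t ≤ ∫ x in s \ t, f x ∂μ := by
  rw [setIntegral_sdiff ht hf hts]
  linarith [setIntegral_le_mul_measureReal_of_le ht hμt (hf.mono_set hts) hK]

end SetIntegral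

section Density

variable {f : ℝ → ℝ}

lemma integrable_sub_sq_mul (h0 : Integrable f) (h1 : Integrable fun t => t * f t)
    (h2 : Integrable fun t => t ^ 2 * f t) (x : ℝ) :
    Integrable fun t => (t - x) ^ 2 * f t := by
  refine ((h2.sub (h1.const_mul (2 * x))).add (h0.const_mul (x ^ 2))).congr
    (ae_of_all _ fun t => ?_)
  simp only [Pi.add_apply, Pi.sub_apply]
  ring

lemma integral_sub_sq_mul (h0 : Integrable f) (h1 : Integrable fun t => t * f t)
    (h2 : Integrable fun t => t ^ 2 * f t) (hmass : ∫ t, f t = 1) (x : ℝ) :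
    ∫ t, (t - x) ^ 2 * f t
      = (∫ t, t ^ 2 * f t) - (∫ t, t * f t) ^ 2 + ((∫ t, t * f t) - x) ^ 2 := by
  have hsub : Integrable fun t => t ^ 2 * f t - 2 * x * (t * f t) := h2.sub (h1.const_mul _)
  calc ∫ t, (t - x) ^ 2 * f t = ∫ t, (t ^ 2 * f t - 2 * x * (t * f t)) + x ^ 2 * f t := by
        congr 1; ext t; ring
    _ = _ := by
        rw [integral_add hsub (h0.const_mul _), integral_sub h2 (h1.const_mul _),
          integral_const_mul, integral_const_mul, hmass]
        ring

lemma setIntegral_compl_Icc_le (hf0 : ∀ t, 0 ≤ f t) (hf : Integrable f) {m r : ℝ} (hr : 0 < r)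
    (hsq : Integrable fun t => (t - m) ^ 2 * f t) :
    ∫ t in (Icc (m - r) (m + r))ᶜ, f t ≤ (∫ t, (t - m) ^ 2 * f t) / r ^ 2 := by
  calc ∫ t in (Icc (m - r) (m + r))ᶜ, f t
      ≤ ∫ t in (Icc (m - r) (m + r))ᶜ, (t - m) ^ 2 * f t / r ^ 2 := by
        refine setIntegral_mono_on hf.integrableOn (hsq.div_const _).integrableOn
          measurableSet_Icc.compl fun t ht => ?_
        have hrt : r ^ 2 ≤ (t - m) ^ 2 := by
          simp only [mem_compl_iff, mem_Icc, not_and_or, not_le] at ht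
          rcases ht with ht | ht <;> nlinarith
        rw [le_div_iff₀ (by positivity)]
        exact (mul_le_mul_of_nonneg_left hrt (hf0 t)).trans_eq (mul_comm _ _)
    _ ≤ ∫ t, (t - m) ^ 2 * f t / r ^ 2 :=
        setIntegral_le_integral (hsq.div_const _) (ae_of_all _ fun t => by positivity [hf0 t])
    _ = (∫ t, (t - m) ^ 2 * f t) / r ^ 2 := integral_div _ _

lemma exists_mem_inter_Icc_const_le (hf0 : ∀ t, 0 ≤ f t) (hf : Integrable f) {s : Set ℝ}
    (hs : MeasurableSet s) {m r c : ℝ} (hr : 0 ≤ r) (hc : 0 ≤ c)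
    (h : 2 * r * c + ∫ t in (Icc (m - r) (m + r))ᶜ, f t < ∫ t in s, f t) :
    ∃ t ∈ s ∩ Icc (m - r) (m + r), c ≤ f t := by
  have hfin : volume (s ∩ Icc (m - r) (m + r)) ≠ ⊤ :=
    measure_ne_top_of_subset inter_subset_right measure_Icc_lt_top.ne
  refine exists_const_le_of_mul_measureReal_lt (hs.inter measurableSet_Icc) hfin hf.integrableOn ?_
  have hvol : volume.real (s ∩ Icc (m - r) (m + r)) ≤ 2 * r := by
    refine (measureReal_mono inter_subset_right measure_Icc_lt_top.ne).trans ?_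
    rw [Real.volume_real_Icc]
    exact max_le (by linarith) (by linarith)
  have hout : ∫ t in s \ Icc (m - r) (m + r), f t ≤ ∫ t in (Icc (m - r) (m + r))ᶜ, f t :=
    setIntegral_mono_set hf.integrableOn (ae_of_all _ hf0) (sdiff_subset_compl _ _).eventuallyLE
  have hsplit := integral_inter_add_sdiff (s := s) (t := Icc (m - r) (m + r)) measurableSet_Icc
    hf.integrableOn
  nlinarith [mul_le_mul_of_nonneg_left hvol hc]

lemma exists_const_le_of_integral_Iio_zero_eq_half (hf0 : ∀ t, 0 ≤ f t) (hf : Integrable f)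
    (hmass : ∫ t, f t = 1) (hmed : ∫ t in Iio 0, f t = 1 / 2) {K : ℝ} (hK : ∀ t, f t ≤ K)
    {m r c δ : ℝ} (hr : 0 ≤ r) (hc : 0 ≤ c) (hδ : 0 ≤ δ)
    (h : 2 * r * c + ∫ t in (Icc (m - r) (m + r))ᶜ, f t < 1 / 2 - K * δ) :
    (∃ a, δ ≤ a ∧ c ≤ f a) ∧ ∃ b, b ≤ -δ ∧ c ≤ f b := by
  have hright : 1 / 2 - K * δ ≤ ∫ t in Ici 0 \ Ico 0 δ, f t := by
    have hhalf : ∫ t in Ici 0, f t = 1 / 2 := by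
      linarith [intervalIntegral.integral_Iio_add_Ici (b := 0) hf.integrableOn hf.integrableOn]
    have := sub_mul_measureReal_le_setIntegral_sdiff (s := Ici 0) (t := Ico 0 δ)
      measurableSet_Ico Ico_subset_Ici_self measure_Ico_lt_top.ne hf.integrableOn fun x _ => hK x
    rwa [hhalf, Real.volume_real_Ico_of_le hδ, sub_zero] at this
  have hleft : 1 / 2 - K * δ ≤ ∫ t in Iio 0 \ Ioo (-δ) 0, f t := by
    have := sub_mul_measureReal_le_setIntegral_sdiff (s := Iio 0) (t := Ioo (-δ) 0)
      measurableSet_Ioo Ioo_subset_Iio_self measure_Ioo_lt_top.ne hf.integrableOn fun x _ => hK x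
    rwa [hmed, Real.volume_real_Ioo_of_le (by linarith), sub_neg_eq_add, zero_add] at this
  obtain ⟨a, ⟨⟨ha0, haδ⟩, -⟩, hfa⟩ := exists_mem_inter_Icc_const_le hf0 hf
    (measurableSet_Ici.diff measurableSet_Ico) hr hc (h.trans_le hright)
  obtain ⟨b, ⟨⟨hb0, hbδ⟩, -⟩, hfb⟩ := exists_mem_inter_Icc_const_le hf0 hf
    (measurableSet_Iio.diff measurableSet_Ioo) hr hc (h.trans_le hleft)
  refine ⟨⟨a, ?_, hfa⟩, ⟨b, ?_, hfb⟩⟩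
  · by_contra! h
    exact haδ ⟨ha0, h⟩
  · by_contra! h
    exact hbδ ⟨h, hb0⟩

lemma exists_mem_Ioc_le_half (hf0 : ∀ t, 0 ≤ f t) (hf : Integrable f) (hmass : ∫ t, f t ≤ 1)
    {x₀ : ℝ} (hx₀ : 0 < f x₀) : ∃ x₁ ∈ Ioc x₀ (x₀ + 3 / f x₀), f x₁ ≤ f x₀ / 2 := by
  by_contra! h
  have hlow := setIntegral_ge_of_const_le_real measurableSet_Ioc measure_Ioc_lt_top.ne
    (fun t ht => (h t ht).le) hf.integrableOn
  have hup := setIntegral_le_integral hf (ae_of_all _ hf0) (s := Ioc x₀ (x₀ + 3 / f x₀))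
  rw [Real.volume_real_Ioc_of_le (le_add_of_nonneg_right (by positivity)),
    add_sub_cancel_left] at hlow
  have : f x₀ / 2 * (3 / f x₀) = 3 / 2 := by field_simp
  linarith

end Density

section ExponentialMoment

variable {β : ℝ}

lemma integrableOn_Ioi_sq_mul_exp_neg_mul (hβ : 0 < β) :
    IntegrableOn (fun t => t ^ 2 * exp (-(β * t))) (Ioi 0) := by
  refine (integrableOn_rpow_mul_exp_neg_mul_rpow (s := 2) (p := 1) (by norm_num) one_pos
    hβ).congr_fun (fun t _ => ?_) measurableSet_Ioi
  simp only [rpow_one, neg_mul]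
  norm_cast

lemma integral_Ioi_sq_mul_exp_neg_mul (hβ : 0 < β) :
    ∫ t in Ioi 0, t ^ 2 * exp (-(β * t)) = 2 / β ^ 3 := by
  have h := integral_rpow_mul_exp_neg_mul_Ioi (a := 3) (by norm_num) hβ
  rw [show (3 : ℝ) = (2 : ℕ) + 1 by norm_num, Gamma_nat_eq_factorial] at h
  norm_num at h
  rw [h, div_eq_inv_mul, mul_comm]

lemma integrableOn_Ioi_sub_sq_mul_exp_neg_mul (hβ : 0 < β) (a : ℝ) :
    IntegrableOn (fun t => (t - a) ^ 2 * exp (-(β * (t - a)))) (Ioi a) := by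
  rw [← (measurePreserving_add_right volume a).integrableOn_comp_preimage
    (measurableEmbedding_addRight a), preimage_add_const_Ioi, sub_self]
  simpa [Function.comp_def] using integrableOn_Ioi_sq_mul_exp_neg_mul hβ

lemma integral_Ioi_sub_sq_mul_exp_neg_mul (hβ : 0 < β) (a : ℝ) :
    ∫ t in Ioi a, (t - a) ^ 2 * exp (-(β * (t - a))) = 2 / β ^ 3 := by
  rw [← (measurePreserving_add_right volume a).setIntegral_preimage_emb
    (measurableEmbedding_addRight a), preimage_add_const_Ioi, sub_self]
  simpa using integral_Ioi_sq_mul_exp_neg_mul hβ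

end ExponentialMoment

namespace ConvexOn

variable {g : ℝ → ℝ}

lemma comp_neg (hg : ConvexOn ℝ univ g) : ConvexOn ℝ univ fun t => g (-t) :=
  hg.comp_linearMap (-LinearMap.id)

lemma le_exp_neg_of_mem_Icc {s : Set ℝ} (hg : ConvexOn ℝ s g) {a b t c : ℝ} (ha : a ∈ s)
    (hb : b ∈ s) (hca : c ≤ exp (-g a)) (hcb : c ≤ exp (-g b)) (ht : t ∈ Icc a b) :
    c ≤ exp (-g t) := by
  have hmax := hg.le_on_segment ha hb (segment_eq_Icc (ht.1.trans ht.2) ▸ ht)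
  rcases le_total (g a) (g b) with h | h
  · rw [max_eq_right h] at hmax
    exact hcb.trans (exp_le_exp.mpr (neg_le_neg hmax))
  · rw [max_eq_left h] at hmax
    exact hca.trans (exp_le_exp.mpr (neg_le_neg hmax))

lemma exp_neg_le_of_le_half (hg : ConvexOn ℝ univ g) {x₀ x₁ x : ℝ} (h01 : x₀ < x₁)
    (hx : x₁ ≤ x) (hhalf : exp (-g x₁) ≤ exp (-g x₀) / 2) :
    exp (-g x) ≤ exp (-g x₀) * exp (-(log 2 / (x₁ - x₀) * (x - x₀))) := by
  have hlog : log 2 ≤ g x₁ - g x₀ := by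
    have := log_le_log (exp_pos _) hhalf
    rw [log_exp, log_div (exp_pos _).ne' two_ne_zero, log_exp] at this
    linarith
  have hslope : (g x₁ - g x₀) / (x₁ - x₀) ≤ (g x - g x₀) / (x - x₀) :=
    hg.secant_mono (mem_univ _) (mem_univ _) (mem_univ _) h01.ne' (h01.trans_le hx).ne' hx
  have hrate : log 2 / (x₁ - x₀) ≤ (g x - g x₀) / (x - x₀) :=
    (div_le_div_of_nonneg_right hlog (by linarith)).trans hslope
  rw [le_div_iff₀ (by linarith)] at hrate
  rw [← exp_add, exp_le_exp]
  linarith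

lemma setIntegral_Ioi_sub_sq_mul_exp_neg_le_of_le_half (hg : ConvexOn ℝ univ g) {x₀ x₁ : ℝ}
    (h01 : x₀ < x₁) (hhalf : exp (-g x₁) ≤ exp (-g x₀) / 2)
    (hsq : IntegrableOn (fun t => (t - x₀) ^ 2 * exp (-g t)) (Ioi x₁)) :
    ∫ t in Ioi x₁, (t - x₀) ^ 2 * exp (-g t) ≤ 2 * exp (-g x₀) * ((x₁ - x₀) / log 2) ^ 3 := by
  set β := log 2 / (x₁ - x₀)
  have hβ : 0 < β := div_pos (log_pos one_lt_two) (by linarith)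
  have hmaj : IntegrableOn (fun t => exp (-g x₀) * ((t - x₀) ^ 2 * exp (-(β * (t - x₀)))))
      (Ioi x₀) := (integrableOn_Ioi_sub_sq_mul_exp_neg_mul hβ x₀).const_mul _
  calc ∫ t in Ioi x₁, (t - x₀) ^ 2 * exp (-g t)
      ≤ ∫ t in Ioi x₁, exp (-g x₀) * ((t - x₀) ^ 2 * exp (-(β * (t - x₀)))) := by
        refine setIntegral_mono_on hsq (hmaj.mono_set (Ioi_subset_Ioi h01.le)) measurableSet_Ioi
          fun t ht => ?_
        exact (mul_le_mul_of_nonneg_left (hg.exp_neg_le_of_le_half h01 (le_of_lt ht) hhalf)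
          (sq_nonneg _)).trans_eq (by ring)
    _ ≤ ∫ t in Ioi x₀, exp (-g x₀) * ((t - x₀) ^ 2 * exp (-(β * (t - x₀)))) :=
        setIntegral_mono_set hmaj (ae_of_all _ fun t => by positivity)
          (Ioi_subset_Ioi h01.le).eventuallyLE
    _ = 2 * exp (-g x₀) * ((x₁ - x₀) / log 2) ^ 3 := by
        rw [integral_const_mul, integral_Ioi_sub_sq_mul_exp_neg_mul hβ]
        simp only [β, div_pow]
        field_simp

lemma setIntegral_Ioi_sub_sq_mul_exp_neg_le (hg : ConvexOn ℝ univ g)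
    (hint : Integrable fun t => exp (-g t)) (hmass : ∫ t, exp (-g t) ≤ 1) {x₀ : ℝ}
    (hsq : Integrable fun t => (t - x₀) ^ 2 * exp (-g t)) :
    ∫ t in Ioi x₀, (t - x₀) ^ 2 * exp (-g t) ≤ 180 / exp (-g x₀) ^ 2 := by
  set M := exp (-g x₀)
  have hM : 0 < M := exp_pos _
  obtain ⟨x₁, ⟨h01, h1⟩, hhalf⟩ :=
    exists_mem_Ioc_le_half (fun t => (exp_pos (-g t)).le) hint hmass hM
  set d := x₁ - x₀
  have hMd : M * d ≤ 3 := by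
    have : d ≤ 3 / M := by simp only [d]; linarith
    rwa [le_div_iff₀ hM, mul_comm] at this
  have hnear : ∫ t in Ioc x₀ x₁, (t - x₀) ^ 2 * exp (-g t) ≤ d ^ 2 :=
    calc ∫ t in Ioc x₀ x₁, (t - x₀) ^ 2 * exp (-g t)
        ≤ ∫ t in Ioc x₀ x₁, d ^ 2 * exp (-g t) := by
          refine setIntegral_mono_on hsq.integrableOn (hint.const_mul _).integrableOn
            measurableSet_Ioc fun t ht => ?_
          gcongr
          · exact sub_nonneg.mpr ht.1.le
          · exact sub_le_sub_right ht.2 _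
      _ = d ^ 2 * ∫ t in Ioc x₀ x₁, exp (-g t) := integral_const_mul _ _
      _ ≤ d ^ 2 * 1 := by
          gcongr
          exact (setIntegral_le_integral hint (ae_of_all _ fun t => (exp_pos _).le)).trans hmass
      _ = d ^ 2 := mul_one _
  have hfar := hg.setIntegral_Ioi_sub_sq_mul_exp_neg_le_of_le_half h01 hhalf hsq.integrableOn
  rw [← Ioc_union_Ioi_eq_Ioi h01.le, setIntegral_union (Ioc_disjoint_Ioi le_rfl) measurableSet_Ioi
    hsq.integrableOn hsq.integrableOn]
  -- `180 ≥ 3² + 2 · 3³ / (log 2)³`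
  have hlog : 0.69 < log 2 := lt_trans (by norm_num) log_two_gt_d9
  have hcube : 2 * (M * d) ^ 3 / log 2 ^ 3 ≤ 171 := by
    rw [div_le_iff₀ (by positivity)]
    have h27 : (M * d) ^ 3 ≤ 27 := by nlinarith [pow_le_pow_left₀ (by positivity) hMd 3]
    nlinarith [pow_le_pow_left₀ (by norm_num) hlog.le 3]
  calc _ ≤ d ^ 2 + 2 * M * (d / log 2) ^ 3 := add_le_add hnear hfar
    _ = ((M * d) ^ 2 + 2 * (M * d) ^ 3 / log 2 ^ 3) / M ^ 2 := by field_simp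
    _ ≤ 180 / M ^ 2 := by
        gcongr
        nlinarith [pow_le_pow_left₀ (by positivity) hMd 2]

lemma setIntegral_Iic_sub_sq_mul_exp_neg_le (hg : ConvexOn ℝ univ g)
    (hint : Integrable fun t => exp (-g t)) (hmass : ∫ t, exp (-g t) ≤ 1) {x₀ : ℝ}
    (hsq : Integrable fun t => (t - x₀) ^ 2 * exp (-g t)) :
    ∫ t in Iic x₀, (t - x₀) ^ 2 * exp (-g t) ≤ 180 / exp (-g x₀) ^ 2 := by
  have hsq' : Integrable fun t => (t - -x₀) ^ 2 * exp (-g (-t)) :=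
    hsq.comp_neg.congr (ae_of_all _ fun t => by ring)
  have h := hg.comp_neg.setIntegral_Ioi_sub_sq_mul_exp_neg_le hint.comp_neg
    (by rwa [integral_neg_eq_self (fun t => exp (-g t))]) hsq'
  rw [neg_neg] at h
  calc ∫ t in Iic x₀, (t - x₀) ^ 2 * exp (-g t)
      = ∫ t in Ioi (-x₀), (-t - x₀) ^ 2 * exp (-g (-t)) := by
        rw [integral_comp_neg_Ioi _ (fun t => (t - x₀) ^ 2 * exp (-g t)), neg_neg]
    _ = ∫ t in Ioi (-x₀), (t - -x₀) ^ 2 * exp (-g (-t)) := by ring_nf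
    _ ≤ _ := h

lemma exp_neg_le_of_one_le_integral_sub_sq_mul (hg : ConvexOn ℝ univ g)
    (hint : Integrable fun t => exp (-g t)) (hmass : ∫ t, exp (-g t) ≤ 1) {x : ℝ}
    (hsq : Integrable fun t => (t - x) ^ 2 * exp (-g t))
    (hvar : 1 ≤ ∫ t, (t - x) ^ 2 * exp (-g t)) : exp (-g x) ≤ 19 := by
  have hsplit := intervalIntegral.integral_Iic_add_Ioi hsq.integrableOn hsq.integrableOn (b := x)
  have hleft := hg.setIntegral_Iic_sub_sq_mul_exp_neg_le hint hmass hsq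
  have hright := hg.setIntegral_Ioi_sub_sq_mul_exp_neg_le hint hmass hsq
  have hsq_le : exp (-g x) ^ 2 ≤ 360 := by
    have := hvar.trans (hsplit.symm.le.trans (add_le_add hleft hright))
    rw [← add_div, le_div_iff₀ (by positivity)] at this
    linarith
  nlinarith [exp_pos (-g x)]

end ConvexOn

theorem logconcave_density_lower_bound_near_median
    (g : ℝ → ℝ) (hg : ConvexOn ℝ Set.univ g)
    (hint : Integrable fun t => Real.exp (-g t))
    (hint1 : Integrable fun t => t * Real.exp (-g t))
    (hint2 : Integrable fun t => t ^ 2 * Real.exp (-g t))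
    -- `e^{-g}` is a probability density
    (hmass : ∫ t, Real.exp (-g t) = 1)
    -- with variance 1
    (hvar : (∫ t, t ^ 2 * Real.exp (-g t)) - (∫ t, t * Real.exp (-g t)) ^ 2 = 1)
    -- and median 0
    (hmed : ∫ t in Set.Iio 0, Real.exp (-g t) = 1 / 2) :
    ∀ t : ℝ, t ∈ Set.Icc (-(1 / (3 * Real.exp 4))) (1 / (3 * Real.exp 4)) →
      Real.exp (-g t) ≥ 1 / (4 * Real.exp 4) := by
  intro t ht
  set m := ∫ t, t * exp (-g t)
  have hpos (x : ℝ) : 0 ≤ exp (-g x) := (exp_pos _).le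
  have hsq := integrable_sub_sq_mul hint hint1 hint2
  have hmoment (x : ℝ) : ∫ t, (t - x) ^ 2 * exp (-g t) = 1 + (m - x) ^ 2 := by
    rw [integral_sub_sq_mul hint hint1 hint2 hmass, hvar]
  have hsup (x : ℝ) : exp (-g x) ≤ 19 :=
    hg.exp_neg_le_of_one_le_integral_sub_sq_mul hint hmass.le (hsq x)
      (by rw [hmoment]; exact le_add_of_nonneg_right (sq_nonneg _))
  have htail : ∫ t in (Icc (m - 3) (m + 3))ᶜ, exp (-g t) ≤ 1 / 9 := by
    have := setIntegral_compl_Icc_le hpos hint three_pos (hsq m)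
    rw [hmoment, sub_self] at this
    norm_num at this ⊢
    exact this
  have hnum : 2 * 3 * (1 / (4 * exp 4)) + 1 / 9 < 1 / 2 - 19 * (1 / (3 * exp 4)) := by
    have hE : 25 ≤ exp 4 := by
      rw [show (4 : ℝ) = 2 + 2 by norm_num, exp_add]
      nlinarith [quadratic_le_exp_of_nonneg (zero_le_two : (0 : ℝ) ≤ 2)]
    rw [← sub_pos]
    field_simp
    nlinarith
  obtain ⟨⟨a, ha, hfa⟩, ⟨b, hb, hfb⟩⟩ := exists_const_le_of_integral_Iio_zero_eq_half
    (m := m) (c := 1 / (4 * exp 4)) (δ := 1 / (3 * exp 4)) hpos hint hmass hmed hsup zero_le_three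
    (by positivity) (by positivity) (by linarith)
  exact hg.le_exp_neg_of_mem_Icc (mem_univ b) (mem_univ a) hfb hfa
    ⟨hb.trans ht.1, ht.2.trans ha⟩
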